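/- If 1 → N → G → Q → 1 is a short exact sequence of groups in which N and Q are finitely presented, then G is finitely presented. -/

import Mathlib

/-- A group is finitely presented if it is isomorphic to the quotient of a finitely
generated free group by the normal closure of a finite set of relations. -/
def FinitelyPresented (G : Type*) [Group G] : Prop :=
  ∃ (n : ℕ) (rels : Set (FreeGroup (Fin n))), rels.Finite ∧
    Nonempty (G ≃* FreeGroup (Fin n) ⧸ Subgroup.normalClosure rels)

/-!
Let `⟨X | R⟩` present `N` and `⟨Y | S⟩` present `G ⧸ N`, and lift each `y ∈ Y` to `G`.
Then `G` is generated by `X ⊔ Y`, with relators `R`, a relator `s * w_s⁻¹` for each `s ∈ S`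
(where `w_s` is a word in `X` equal in `N` to the lift of `s`), and relators expressing
each conjugate `g^{±1} x g^{∓1}` (`g ∈ X ⊔ Y`, `x ∈ X`) as a word in `X`. Modulo these,
the subgroup `K` generated by `X` is normal and contains the lifts of `S`, so every
element is `k * v` with `k ∈ K` and `v` a word in `Y`; if it dies in `G`, then `v` is
a relator of `G ⧸ N`, hence lies in `K`, and the element is a word in `X` dying in `N`,
hence a consequence of `R`.
-/

open Function Subgroup

theorem finitelyPresented_iff_isFinitelyPresented {G : Type*} [Group G] :
    FinitelyPresented G ↔ Group.IsFinitelyPresented G := by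
  refine ⟨fun ⟨n, rels, hrels, ⟨e⟩⟩ => ?_,
    fun _ => Group.IsFinitelyPresented.exists_mulEquiv_presentedGroup⟩
  have := hrels.to_subtype
  exact .equiv (G := PresentedGroup rels) e.symm

theorem Subgroup.normal_sup_closure_of_conj_mem {P : Type*} [Group P] {M : Subgroup P}
    [M.Normal] {s t : Set P} (hs : closure s = ⊤)
    (ht : ∀ g ∈ s, ∀ x ∈ t, g * x * g⁻¹ ∈ M ⊔ closure t ∧ g⁻¹ * x * g ∈ M ⊔ closure t) :
    (M ⊔ closure t).Normal := by
  have conj_mem : ∀ g : P, (∀ x ∈ t, g * x * g⁻¹ ∈ M ⊔ closure t) →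
      ∀ k ∈ M ⊔ closure t, g * k * g⁻¹ ∈ M ⊔ closure t := fun g hg =>
    sup_le (fun m hm => mem_sup_left (‹M.Normal›.conj_mem m hm g))
      ((closure_le (K := (M ⊔ closure t).comap (MulAut.conj g).toMonoidHom)).2 hg)
  refine ⟨fun k hk g => ?_⟩
  induction (hs ▸ mem_top g : g ∈ closure s) using closure_induction'' generalizing k with
  | mem g hg => exact conj_mem g (fun x hx => (ht g hg x hx).1) k hk
  | inv_mem g hg => exact conj_mem g⁻¹ (fun x hx => by simpa using (ht g hg x hx).2) k hk
  | one => simpa using hk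
  | mul g h _ _ ihg ihh => simpa [mul_assoc] using ihg _ (ihh k hk)

theorem MonoidHom.surjective_of_le_range {G P : Type*} [Group G] [Group P] {N : Subgroup G}
    [N.Normal] (f : P →* G) (hN : N ≤ f.range) (h : Surjective ((QuotientGroup.mk' N).comp f)) :
    Surjective f := by
  rw [← MonoidHom.range_eq_top] at h ⊢
  have hker : (QuotientGroup.mk' N).ker ≤ f.range := (QuotientGroup.ker_mk' N).symm ▸ hN
  rw [← comap_map_eq_self hker, ← MonoidHom.range_comp, h, comap_top]

theorem FreeGroup.range_map_inl_sup_range_map_inr (X Y : Type*) :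
    (FreeGroup.map (Sum.inl : X → X ⊕ Y)).range ⊔ (FreeGroup.map Sum.inr).range = ⊤ := by
  rw [range_map, range_map, ← Subgroup.closure_union, ← Set.image_union,
    Set.range_inl_union_range_inr, Set.image_univ, closure_range_of]

theorem ker_eq_of_extension {G P A B : Type*} [Group G] [Group P] [Group A] [Group B]
    {N : Subgroup G} {F : P →* G} {ι : A →* P} {κ : B →* P} {φ : A →* N}
    (hgen : ι.range ⊔ κ.range = ⊤) (hφ : ∀ a, F (ι a) = φ a) {M : Subgroup P} [M.Normal]
    (hMF : M ≤ F.ker) (hK : (M ⊔ ι.range).Normal) (hA : φ.ker.map ι ≤ M)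
    (hB : ∀ b, F (κ b) ∈ N → κ b ∈ M ⊔ ι.range) : F.ker = M := by
  refine le_antisymm (fun p hp => ?_) hMF
  have hKN : M ⊔ ι.range ≤ N.comap F :=
    sup_le (hMF.trans fun m hm => by simp [(F.mem_ker).1 hm])
      (by rintro _ ⟨a, rfl⟩; simp [hφ])
  have hpK : p ∈ M ⊔ ι.range := by
    have : p ∈ (M ⊔ ι.range) ⊔ κ.range := by
      rw [sup_assoc, hgen, sup_top_eq]; trivial
    obtain ⟨k, hk, _, ⟨b, rfl⟩, rfl⟩ := mem_sup_of_normal_left.1 this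
    refine mul_mem hk (hB b ?_)
    rw [eq_inv_of_mul_eq_one_right (a := F k) (b := F (κ b)) (by simpa using (F.mem_ker).1 hp)]
    exact inv_mem (hKN hk)
  obtain ⟨m, hm, _, ⟨a, rfl⟩, rfl⟩ := mem_sup_of_normal_left.1 hpK
  refine mul_mem hm (hA ⟨a, ?_, rfl⟩)
  have : F (ι a) = 1 := by simpa [(F.mem_ker).1 (hMF hm)] using (F.mem_ker).1 hp
  exact (φ.mem_ker).2 (Subtype.ext (by simpa [hφ] using this))

theorem exists_finite_subset_ker_and_mem_closure_sup_range {G P A : Type*} [Group G] [Group P]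
    [Group A] {N : Subgroup G} {F : P →* G} {ι : A →* P} {φ : A →* N} (hφsurj : Surjective φ)
    (hφ : ∀ a, F (ι a) = φ a) {U : Set P} (hU : U.Finite) (hUN : ∀ p ∈ U, F p ∈ N) :
    ∃ T : Set P, T.Finite ∧ T ⊆ F.ker ∧ ∀ p ∈ U, p ∈ closure T ⊔ ι.range := by
  have := hU.to_subtype
  choose w hw using fun p : U => hφsurj ⟨F p, hUN p p.2⟩
  refine ⟨Set.range fun p : U => p * (ι (w p))⁻¹, Set.finite_range _, ?_, fun p hp => ?_⟩
  · rintro _ ⟨p, rfl⟩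
    simp [hφ, hw]
  · exact inv_mul_cancel_right p (ι (w ⟨p, hp⟩)) ▸
      mul_mem_sup (subset_closure ⟨⟨p, hp⟩, rfl⟩) ⟨_, rfl⟩

open FreeGroup in
theorem ker_isFinitelyNormallyGenerated_of_extension {G X Y : Type*} [Group G] [Finite X]
    [Finite Y] {N : Subgroup G} [N.Normal] (F : FreeGroup (X ⊕ Y) →* G) (φ : FreeGroup X →* N)
    (hφsurj : Surjective φ) (hφ : ∀ a, F (map Sum.inl a) = φ a)
    (hφker : φ.ker.IsFinitelyNormallyGenerated)
    (hQker : ((QuotientGroup.mk' N).comp (F.comp (map Sum.inr))).ker.IsFinitelyNormallyGenerated) :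
    F.ker.IsFinitelyNormallyGenerated := by
  obtain ⟨R, hRfin, hR⟩ := hφker
  obtain ⟨S, hSfin, hS⟩ := hQker
  set ι : FreeGroup X →* FreeGroup (X ⊕ Y) := map Sum.inl
  set κ : FreeGroup Y →* FreeGroup (X ⊕ Y) := map Sum.inr
  set gens : Set (FreeGroup (X ⊕ Y)) := Set.range of
  set t : Set (FreeGroup (X ⊕ Y)) := of '' Set.range Sum.inl
  have ht : closure t = ι.range := range_map.symm
  set U : Set (FreeGroup (X ⊕ Y)) :=
    κ '' S ∪ Set.image2 (fun g x => g * x * g⁻¹) (gens ∪ gens⁻¹) t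
  have hU : ∀ p ∈ U, F p ∈ N := by
    rintro _ (⟨s, hs, rfl⟩ | ⟨g, -, _, ⟨_, ⟨x, rfl⟩, rfl⟩, rfl⟩)
    · exact (QuotientGroup.eq_one_iff _).1 ((MonoidHom.mem_ker).1 (hS ▸ subset_normalClosure hs))
    · have := hφ (of x)
      simp only [ι, map.of] at this
      simpa [this] using ‹N.Normal›.conj_mem _ (φ (of x)).2 (F g)
  have hUfin : U.Finite :=
    (hSfin.image _).union (((Set.finite_range _).union (Set.finite_range _).inv).image2 _
      ((Set.finite_range _).image _))
  obtain ⟨T, hTfin, hTker, hUT⟩ :=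
    exists_finite_subset_ker_and_mem_closure_sup_range hφsurj hφ hUfin hU
  set M := normalClosure (ι '' R ∪ T)
  have hMker : M ≤ F.ker := by
    refine normalClosure_le_normal (Set.union_subset ?_ hTker)
    rintro _ ⟨r, hr, rfl⟩
    simpa [hφ] using (MonoidHom.mem_ker).1 (hR ▸ subset_normalClosure hr)
  have hUM : ∀ p ∈ U, p ∈ M ⊔ ι.range := fun p hp =>
    sup_le_sup_right (closure_le_normalClosure.trans (normalClosure_mono Set.subset_union_right))
      _ (hUT p hp)
  have hK : (M ⊔ ι.range).Normal := by
    rw [← ht] at hUM ⊢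
    refine normal_sup_closure_of_conj_mem (closure_range_of _) fun g hg x hx => ⟨?_, ?_⟩
    · exact hUM _ (Or.inr ⟨g, Or.inl hg, x, hx, rfl⟩)
    · simpa using hUM _ (Or.inr ⟨g⁻¹, Or.inr (Set.inv_mem_inv.2 hg), x, hx, rfl⟩)
  have hA : φ.ker.map ι ≤ M := by
    rw [← hR, map_le_iff_le_comap]
    exact normalClosure_le_normal fun r hr => subset_normalClosure (Or.inl ⟨r, hr, rfl⟩)
  have hB : ∀ b, F (κ b) ∈ N → κ b ∈ M ⊔ ι.range := by
    intro b hb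
    have hb' : b ∈ normalClosure S := hS ▸ (QuotientGroup.eq_one_iff _).2 hb
    exact normalClosure_le_normal (N := (M ⊔ ι.range).comap κ)
      (fun s hs => hUM _ (Or.inl ⟨s, hs, rfl⟩)) hb'
  exact ⟨ι '' R ∪ T, (hRfin.image _).union hTfin,
    (ker_eq_of_extension (range_map_inl_sup_range_map_inr X Y) hφ hMker hK hA hB).symm⟩

open FreeGroup in
theorem Group.IsFinitelyPresented.of_extension {G : Type*} [Group G] (N : Subgroup G) [N.Normal]
    [hN : IsFinitelyPresented N] [hQ : IsFinitelyPresented (G ⧸ N)] : IsFinitelyPresented G := by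
  obtain ⟨n, φ, hφsurj, hφker⟩ := hN
  obtain ⟨m, ψ, hψsurj, hψker⟩ := hQ
  let F : FreeGroup (Fin n ⊕ Fin m) →* G :=
    lift (Sum.elim (fun i => (φ (of i) : G)) fun j => (ψ (of j)).out)
  have hφ : ∀ a, F (map Sum.inl a) = φ a :=
    DFunLike.congr_fun (ext_hom (F.comp (map Sum.inl)) (N.subtype.comp φ) fun _ => by simp [F])
  have hψ : (QuotientGroup.mk' N).comp (F.comp (map Sum.inr)) = ψ :=
    ext_hom _ _ fun _ => by simp [F]
  have hFsurj : Surjective F := by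
    refine F.surjective_of_le_range (N := N) (fun z hz => ?_) fun q => ?_
    · obtain ⟨a, ha⟩ := hφsurj ⟨z, hz⟩
      exact ⟨map Sum.inl a, by rw [hφ, ha]⟩
    · obtain ⟨b, rfl⟩ := hψsurj q
      exact ⟨map Sum.inr b, by rw [← hψ]; rfl⟩
  exact of_surjective F hFsurj
    (ker_isFinitelyNormallyGenerated_of_extension F φ hφsurj hφ hφker (hψ ▸ hψker))

/-- If `1 → N → G → G/N → 1` is a short exact sequence of groups with `N` and `G/N`
finitely presented, then `G` is finitely presented. -/
theorem stmt2 {G : Type*} [Group G] (N : Subgroup G) [N.Normal]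
    (hN : FinitelyPresented N) (hQ : FinitelyPresented (G ⧸ N)) :
    FinitelyPresented G := by
  rw [finitelyPresented_iff_isFinitelyPresented] at *
  exact .of_extension N
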